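/- Let X be a compactum (a compact perfect metric space with more than one point), let n ≥ 2 be an integer, and let f : X → X be a continuous map. Then F_n(f) is multi-transitive if and only if SF_n(f) is multi-transitive; moreover, if F_n(f) is multi-transitive, then f is multi-transitive. -/

import Mathlib

open Metric Set TopologicalSpace

variable (X : Type*) [MetricSpace X] (n : ℕ)

/-- The `n`-fold symmetric product `F_n(X)`: nonempty subsets of `X` with at most `n`
points, as a subspace of the nonempty compact subsets of `X` with the Hausdorff metric. -/
abbrev Fn := {A : NonemptyCompacts X // (A : Set X).Finite ∧ (A : Set X).ncard ≤ n}

/-- The induced map `F_n(f)` on the `n`-fold symmetric product, `A ↦ f(A)`. -/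
noncomputable def FnMap (f : X → X) : Fn X n → Fn X n := fun A =>
  ⟨⟨⟨f '' (A.1 : Set X), (A.2.1.image f).isCompact⟩, A.1.nonempty.image f⟩,
    A.2.1.image f, le_trans (Set.ncard_image_le A.2.1) A.2.2⟩

/-- `F_1(X) ⊆ F_n(X)`: the set of singletons. -/
def F1 : Set (Fn X n) := {A | ∃ x : X, (A.1 : Set X) = {x}}

/-- The setoid collapsing `F_1(X)` to a point. -/
def SFnSetoid : Setoid (Fn X n) where
  r A B := A = B ∨ (A ∈ F1 X n ∧ B ∈ F1 X n)
  iseqv := by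
    refine ⟨fun _ => Or.inl rfl, fun h => h.imp Eq.symm And.symm, fun h₁ h₂ => ?_⟩
    rcases h₁ with rfl | h₁
    · exact h₂
    · rcases h₂ with rfl | h₂
      · exact Or.inr h₁
      · exact Or.inr ⟨h₁.1, h₂.2⟩

/-- The `n`-fold symmetric product suspension `SF_n(X) = F_n(X)/F_1(X)`,
with the quotient topology. -/
abbrev SFn := Quotient (SFnSetoid X n)

/-- The quotient map `q : F_n(X) → SF_n(X)`. -/
def SFnQ : Fn X n → SFn X n := Quotient.mk (SFnSetoid X n)

/-- The induced map `SF_n(f)` on the suspension, with `SF_n(f) ∘ q = q ∘ F_n(f)`. -/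
noncomputable def SFnMap (f : X → X) : SFn X n → SFn X n :=
  Quotient.lift (fun A => SFnQ X n (FnMap X n f A))
    (fun A B h => Quotient.sound (by
      rcases h with rfl | ⟨⟨x, hx⟩, ⟨y, hy⟩⟩
      · exact Or.inl rfl
      · exact Or.inr ⟨⟨f x, by simp [FnMap, hx]⟩, ⟨f y, by simp [FnMap, hy]⟩⟩))

/-- The metric `ρ` on `SF_n(X)`:
`ρ(χ₁,χ₂) = H(F_1(X) ∪ q⁻¹(χ₁), F_1(X) ∪ q⁻¹(χ₂))` where `H` is the Hausdorff
distance between subsets of `F_n(X)`. -/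
noncomputable def SFnDist : SFn X n → SFn X n → ℝ := fun a b =>
  Metric.hausdorffDist (F1 X n ∪ SFnQ X n ⁻¹' {a}) (F1 X n ∪ SFnQ X n ⁻¹' {b})

/-- `g` is (topologically) transitive. -/
def TransitiveMap {Z : Type*} [TopologicalSpace Z] (g : Z → Z) : Prop :=
  ∀ U V : Set Z, IsOpen U → IsOpen V → U.Nonempty → V.Nonempty →
    ∃ k : ℕ, 0 < k ∧ (g^[k] '' U ∩ V).Nonempty

/-- `g` is multi-transitive: for every `m ≥ 1` the map
`g × g² × ⋯ × g^m : Z^m → Z^m` is transitive. -/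
def MultiTransitive {Z : Type*} [TopologicalSpace Z] (g : Z → Z) : Prop :=
  ∀ m : ℕ, 0 < m →
    TransitiveMap (fun z : Fin m → Z => fun i => g^[(i : ℕ) + 1] (z i))


/-! Multi-transitivity of `g` need only be tested on open boxes, where it asks for one `k > 0`
with `g^[i * k] '' Uᵢ ∩ Vᵢ ≠ ∅` for all `i ≤ m`. So it passes from `F` to `G` as soon as every
nonempty open `U` downstairs has a nonempty open `φ U` upstairs whose return times under `F` are
return times of `U` under `G`. From `F_n(f)` to `SF_n(f)` take `q⁻¹(U)`; from `SF_n(f)` to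
`F_n(f)` take `q(U \ F_1(X))`, which is open and nonempty because `F_1(X)` is closed and, `X` being
perfect, nowhere dense (pairs `{x, y}` approximate `{x}`), and on which `q` is injective; from
`F_n(f)` to `f` take `{A | A ⊆ U}`. -/

open Filter Topology

theorem iterate_pi_iterate_apply {Z : Type*} {m : ℕ} (g : Z → Z) (k : ℕ) (z : Fin m → Z)
    (i : Fin m) :
    (fun z : Fin m → Z => fun i => g^[(i : ℕ) + 1] (z i))^[k] z i
      = g^[((i : ℕ) + 1) * k] (z i) := by
  rw [show (fun z : Fin m → Z => fun i : Fin m => g^[(i : ℕ) + 1] (z i))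
      = Pi.map fun i : Fin m => g^[(i : ℕ) + 1] from rfl,
    Pi.map_iterate, Pi.map_apply, Function.iterate_mul]

section MultiTransitive

variable {Y Z : Type*} [TopologicalSpace Y] [TopologicalSpace Z]

theorem multiTransitive_iff_forall_opens {g : Z → Z} :
    MultiTransitive g ↔ ∀ m : ℕ, 0 < m → ∀ U V : Fin m → Set Z,
      (∀ i, IsOpen (U i)) → (∀ i, IsOpen (V i)) → (∀ i, (U i).Nonempty) →
      (∀ i, (V i).Nonempty) →
      ∃ k, 0 < k ∧ ∀ i : Fin m, (g^[((i : ℕ) + 1) * k] '' U i ∩ V i).Nonempty := by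
  refine ⟨fun h m hm U V hU hV hUne hVne => ?_, fun h m hm U V hU hV ⟨u, hu⟩ ⟨v, hv⟩ => ?_⟩
  · choose u hu using hUne
    choose v hv using hVne
    obtain ⟨k, hk, _, ⟨z, hz, rfl⟩, hzV⟩ := h m hm (univ.pi U) (univ.pi V)
      (isOpen_set_pi finite_univ fun i _ => hU i) (isOpen_set_pi finite_univ fun i _ => hV i)
      ⟨u, fun i _ => hu i⟩ ⟨v, fun i _ => hv i⟩
    refine ⟨k, hk, fun i => ⟨_, ⟨z i, hz i trivial, rfl⟩, ?_⟩⟩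
    rw [← iterate_pi_iterate_apply]
    exact hzV i trivial
  · obtain ⟨U', hU', hU'U⟩ := isOpen_pi_iff'.mp hU u hu
    obtain ⟨V', hV', hV'V⟩ := isOpen_pi_iff'.mp hV v hv
    obtain ⟨k, hk, hki⟩ := h m hm U' V' (fun i => (hU' i).1) (fun i => (hV' i).1)
      (fun i => ⟨u i, (hU' i).2⟩) (fun i => ⟨v i, (hV' i).2⟩)
    choose y hy hyV' using hki
    choose x hxU' hxy using hy
    refine ⟨k, hk, _, ⟨x, hU'U fun i _ => hxU' i, rfl⟩, hV'V fun i _ => ?_⟩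
    rw [iterate_pi_iterate_apply, hxy]
    exact hyV' i

theorem MultiTransitive.of_opens {F : Y → Y} {G : Z → Z} (hF : MultiTransitive F)
    (φ : Set Z → Set Y) (hφ_open : ∀ U, IsOpen U → IsOpen (φ U))
    (hφ_nonempty : ∀ U, IsOpen U → U.Nonempty → (φ U).Nonempty)
    (hφ : ∀ U V k, (F^[k] '' φ U ∩ φ V).Nonempty → (G^[k] '' U ∩ V).Nonempty) :
    MultiTransitive G := by
  rw [multiTransitive_iff_forall_opens] at hF ⊢
  intro m hm U V hU hV hUne hVne
  obtain ⟨k, hk, hki⟩ := hF m hm (φ ∘ U) (φ ∘ V) (fun i => hφ_open _ (hU i))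
    (fun i => hφ_open _ (hV i)) (fun i => hφ_nonempty _ (hU i) (hUne i))
    (fun i => hφ_nonempty _ (hV i) (hVne i))
  exact ⟨k, hk, fun i => hφ _ _ _ (hki i)⟩

end MultiTransitive

section SymmetricProduct

variable {X : Type*} [MetricSpace X] {n : ℕ}

theorem coe_FnMap_iterate (f : X → X) (k : ℕ) (A : Fn X n) :
    (((FnMap X n f)^[k] A).1 : Set X) = f^[k] '' (A.1 : Set X) := by
  have h : Function.Semiconj (fun A : Fn X n => (A.1 : Set X)) (FnMap X n f) (image f) :=
    fun _ => rfl
  exact (h.iterate_right k A).trans (by rw [Set.image_iterate_eq])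

theorem isOpen_setOf_coe_subset {U : Set X} (hU : IsOpen U) :
    IsOpen {A : Fn X n | (A.1 : Set X) ⊆ U} :=
  (NonemptyCompacts.isOpen_subsets_of_isOpen hU).preimage continuous_subtype_val

theorem isClosed_F1 : IsClosed (F1 X n) := by
  have h : F1 X n = Subtype.val ⁻¹' range ({·} : X → NonemptyCompacts X) := by
    ext A
    simp [F1, eq_comm, NonemptyCompacts.ext_iff]
  rw [h]
  exact NonemptyCompacts.isClosedEmbedding_singleton.isClosed_range.preimage
    continuous_subtype_val

theorem dense_compl_F1 [PerfectSpace X] (hn : 2 ≤ n) : Dense (F1 X n)ᶜ := by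
  refine dense_iff_inter_open.mpr fun W hW ⟨A, hA⟩ => ?_
  by_cases hAF : A ∈ F1 X n
  swap
  · exact ⟨A, hA, hAF⟩
  obtain ⟨x, hx⟩ := hAF
  let pair : X → Fn X n := fun y =>
    ⟨{x} ⊔ {y}, (finite_singleton x).union (finite_singleton y),
      (ncard_union_le _ _).trans (by simpa using hn)⟩
  have hpair : Continuous pair :=
    (continuous_const.sup NonemptyCompacts.continuous_singleton).subtype_mk _
  have hpair_x : pair x = A := Subtype.ext (NonemptyCompacts.ext (by simp [pair, hx]))
  have hmem : pair ⁻¹' W ∈ 𝓝[≠] x :=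
    mem_nhdsWithin_of_mem_nhds (hpair.continuousAt.preimage_mem_nhds
      (hW.mem_nhds (hpair_x ▸ hA)))
  obtain ⟨y, hyW, hyx⟩ := Filter.nonempty_of_mem (inter_mem hmem self_mem_nhdsWithin)
  refine ⟨pair y, hyW, fun ⟨z, hz⟩ => hyx ?_⟩
  have hxz : x ∈ ({z} : Set X) := hz ▸ Or.inl rfl
  have hyz : y ∈ ({z} : Set X) := hz ▸ Or.inr rfl
  exact hyz.trans hxz.symm

theorem SFnQ_semiconj (f : X → X) :
    Function.Semiconj (SFnQ X n) (FnMap X n f) (SFnMap X n f) :=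
  fun _ => rfl

theorem continuous_SFnQ : Continuous (SFnQ X n) :=
  continuous_quotient_mk'

theorem SFnQ_surjective : Function.Surjective (SFnQ X n) :=
  Quotient.mk_surjective

theorem SFnQ_eq_iff {A B : Fn X n} :
    SFnQ X n A = SFnQ X n B ↔ A = B ∨ (A ∈ F1 X n ∧ B ∈ F1 X n) :=
  Quotient.eq

theorem SFnQ_preimage_image {W : Set (Fn X n)} (hW : Disjoint W (F1 X n)) :
    SFnQ X n ⁻¹' (SFnQ X n '' W) = W := by
  refine Subset.antisymm ?_ (subset_preimage_image _ _)
  rintro A ⟨B, hB, hBA⟩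
  rcases SFnQ_eq_iff.mp hBA with rfl | ⟨hBF, -⟩
  · exact hB
  · exact absurd hBF (hW.notMem_of_mem_left hB)

theorem isOpen_SFnQ_image {W : Set (Fn X n)} (hW : IsOpen W) (hWF : Disjoint W (F1 X n)) :
    IsOpen (SFnQ X n '' W) := by
  rw [← isQuotientMap_quotient_mk'.isOpen_preimage]
  exact (SFnQ_preimage_image hWF).symm ▸ hW

theorem multiTransitive_SFnMap_of_FnMap {f : X → X} (hF : MultiTransitive (FnMap X n f)) :
    MultiTransitive (SFnMap X n f) := by
  refine hF.of_opens (SFnQ X n ⁻¹' ·) (fun U hU => hU.preimage continuous_SFnQ)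
    (fun U _ hU => hU.preimage SFnQ_surjective) ?_
  rintro U V k ⟨_, ⟨A, hA, rfl⟩, hAV⟩
  exact ⟨_, ⟨_, hA, ((SFnQ_semiconj f).iterate_right k A).symm⟩, hAV⟩

theorem multiTransitive_FnMap_of_SFnMap [PerfectSpace X] (hn : 2 ≤ n) {f : X → X}
    (hS : MultiTransitive (SFnMap X n f)) : MultiTransitive (FnMap X n f) := by
  refine hS.of_opens (fun U => SFnQ X n '' (U \ F1 X n))
    (fun U hU => isOpen_SFnQ_image (hU.sdiff isClosed_F1) disjoint_sdiff_left)
    (fun U hU hUne => ((dense_compl_F1 hn).inter_open_nonempty U hU hUne).image _) ?_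
  rintro U V k ⟨_, ⟨_, ⟨A, hA, rfl⟩, rfl⟩, hAV⟩
  rw [← (SFnQ_semiconj f).iterate_right k A, ← mem_preimage,
    SFnQ_preimage_image disjoint_sdiff_left] at hAV
  exact ⟨_, ⟨A, hA.1, rfl⟩, hAV.1⟩

theorem multiTransitive_of_FnMap (hn : 1 ≤ n) {f : X → X}
    (hF : MultiTransitive (FnMap X n f)) : MultiTransitive f := by
  refine hF.of_opens (fun U => {A : Fn X n | (A.1 : Set X) ⊆ U})
    (fun U hU => isOpen_setOf_coe_subset hU) (fun U _ ⟨x, hx⟩ => ?_) ?_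
  · exact ⟨⟨{x}, finite_singleton x, by simpa using hn⟩, by simpa using hx⟩
  rintro U V k ⟨_, ⟨A, hAU, rfl⟩, hAV⟩
  obtain ⟨x, hx⟩ := A.1.nonempty
  have hAV' : f^[k] '' (A.1 : Set X) ⊆ V := coe_FnMap_iterate f k A ▸ hAV
  exact ⟨f^[k] x, mem_image_of_mem _ (hAU hx), hAV' (mem_image_of_mem _ hx)⟩

end SymmetricProduct

theorem stmt8_general (X : Type*) [MetricSpace X]
    (hX : Perfect (Set.univ : Set X))
    (n : ℕ) (hn : 2 ≤ n) (f : X → X) :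
    (MultiTransitive (FnMap X n f) ↔ MultiTransitive (SFnMap X n f)) ∧
    (MultiTransitive (FnMap X n f) → MultiTransitive f) := by
  have : PerfectSpace X := ⟨hX.acc⟩
  exact ⟨⟨multiTransitive_SFnMap_of_FnMap, multiTransitive_FnMap_of_SFnMap hn⟩,
    multiTransitive_of_FnMap (one_le_two.trans hn)⟩

theorem stmt8 (X : Type*) [MetricSpace X] [CompactSpace X] [Nontrivial X]
    (hX : Perfect (Set.univ : Set X))
    (n : ℕ) (hn : 2 ≤ n) (f : X → X) (hf : Continuous f) :
    (MultiTransitive (FnMap X n f) ↔ MultiTransitive (SFnMap X n f)) ∧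
    (MultiTransitive (FnMap X n f) → MultiTransitive f) :=
  stmt8_general X hX n hn f
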